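/- Let A be self-adjoint and B symmetric and A-bounded in a Hilbert space, and suppose A + tB (defined on dom(A)) is closed for every t ∈ [0,1]. Then A + B is self-adjoint on dom(A). -/

import Mathlib

/-!
Each `A + tB` is symmetric, so `‖(A + tB ± i)x‖² = ‖(A + tB)x‖² + ‖x‖²`; it is closed on `dom A`,
so by the open mapping theorem its graph norm is equivalent to that of `A`, and `B` is
`(A + tB ± i)`-bounded with some constant `K_t`. A bijection from `dom A` onto `H` stays onto
under perturbations of relative bound `< 1`, so the set of `t ∈ [0,1]` for which `A + tB ± i` is
onto is open and closed in `[0,1]`. It contains `0` because `A` is self-adjoint, hence also `1`,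
and a symmetric operator `A + B` with `A + B ± i` onto is self-adjoint.
-/

open Function Filter Topology
open scoped InnerProductSpace ComplexConjugate

noncomputable section

/-- A densely defined operator `A` is self-adjoint. -/
def IsSelfAdjointPMap {H : Type*} [NormedAddCommGroup H] [InnerProductSpace ℂ H]
    (A : H →ₗ.[ℂ] H) : Prop :=
  Dense (A.domain : Set H) ∧
  ∀ ψ χ : H, (ψ, χ) ∈ A.graph ↔
    ∀ (x : H) (hx : x ∈ A.domain), (inner ℂ ψ (A ⟨x, hx⟩) : ℂ) = (inner ℂ χ x : ℂ)

section Graph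

variable {R E F : Type*} [Ring R] [AddCommGroup E] [Module R E] [AddCommGroup F] [Module R F]

theorem LinearPMap.coe_graph_mk (D : Submodule R E) (T : D →ₗ[R] F) :
    ((LinearPMap.mk D T).graph : Set (E × F)) = {p | ∃ hp : p.1 ∈ D, p.2 = T ⟨p.1, hp⟩} := by
  ext ⟨x, y⟩
  simp only [SetLike.mem_coe, LinearPMap.mem_graph_iff, Set.mem_ofPred_eq]
  constructor
  · rintro ⟨⟨x, hx⟩, rfl, rfl⟩
    exact ⟨hx, rfl⟩
  · rintro ⟨hx, h⟩
    exact ⟨⟨x, hx⟩, rfl, h.symm⟩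

theorem LinearPMap.graph_mk (D : Submodule R E) (T : D →ₗ[R] F) :
    (LinearPMap.mk D T).graph = LinearMap.range (D.subtype.prod T) := by
  ext p
  simp [LinearPMap.mem_graph_iff, Prod.ext_iff]

end Graph

section Banach

variable {𝕜 E F M : Type*} [NontriviallyNormedField 𝕜]
  [NormedAddCommGroup E] [NormedSpace 𝕜 E] [NormedAddCommGroup F] [NormedSpace 𝕜 F]
  [AddCommGroup M] [Module 𝕜 M]

-- `T + S = (1 + S T⁻¹) T`, and `‖S T⁻¹‖ ≤ c < 1` makes `1 + S T⁻¹` invertible.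
theorem LinearMap.surjective_add_of_norm_le [CompleteSpace F] {T S : M →ₗ[𝕜] F}
    (hT : Bijective T) {c : ℝ} (hc : c < 1) (hS : ∀ x, ‖S x‖ ≤ c * ‖T x‖) :
    Surjective (T + S) := by
  let e := LinearEquiv.ofBijective T hT
  have hTe : ∀ y, T (e.symm y) = y := e.apply_symm_apply
  have hU : ∀ y, ‖S (e.symm y)‖ ≤ c * ‖y‖ := fun y => by
    simpa only [hTe] using hS (e.symm y)
  let U : F →L[𝕜] F := (S ∘ₗ e.symm.toLinearMap).mkContinuous c hU
  have hunit : IsUnit (1 - -U) := isUnit_one_sub_of_norm_lt_one <| by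
    rw [norm_neg]
    exact (LinearMap.mkContinuous_norm_le' _ hU).trans_lt (max_lt hc one_pos)
  intro y
  obtain ⟨z, hz⟩ := (ContinuousLinearMap.isUnit_iff_bijective.mp hunit).2 y
  refine ⟨e.symm z, ?_⟩
  rw [← hz]
  simp [U, hTe]

-- The graph norm of `T` is dominated by that of `S`; both are complete, so by the open mapping
-- theorem they are equivalent.
theorem exists_norm_le_of_isClosed_graph [CompleteSpace E] [CompleteSpace F]
    {D : Submodule 𝕜 E} {S T : D →ₗ[𝕜] F}
    (hS : (LinearPMap.mk D S).IsClosed) (hT : (LinearPMap.mk D T).IsClosed) {K : ℝ}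
    (hK : ∀ x, ‖T x‖ ≤ K * (‖S x‖ + ‖(x : E)‖)) :
    ∃ C, 0 ≤ C ∧ ∀ x, ‖S x‖ ≤ C * (‖T x‖ + ‖(x : E)‖) := by
  rw [LinearPMap.IsClosed, LinearPMap.graph_mk] at hS hT
  have := hS.completeSpace_coe
  have := hT.completeSpace_coe
  have graph_injective (R : D →ₗ[𝕜] F) : Injective (D.subtype.prod R) :=
    fun x y h => Subtype.ext (congrArg Prod.fst h)
  let eS := LinearEquiv.ofInjective _ (graph_injective S)
  let eT := LinearEquiv.ofInjective _ (graph_injective T)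
  have norm_eS (x : D) : ‖eS x‖ = max ‖(x : E)‖ ‖S x‖ := rfl
  have norm_eT (x : D) : ‖eT x‖ = max ‖(x : E)‖ ‖T x‖ := rfl
  have hΨ (p) : ‖(eS.symm.trans eT) p‖ ≤ (1 + 2 * |K|) * ‖p‖ := by
    obtain ⟨x, rfl⟩ := eS.surjective p
    rw [LinearEquiv.trans_apply, eS.symm_apply_apply, norm_eT, norm_eS]
    have hx := le_max_left ‖(x : E)‖ ‖S x‖
    have hSx := le_max_right ‖(x : E)‖ ‖S x‖
    have hTx : ‖T x‖ ≤ |K| * (‖S x‖ + ‖(x : E)‖) :=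
      (hK x).trans (mul_le_mul_of_nonneg_right (le_abs_self K) (by positivity))
    have := mul_le_mul_of_nonneg_left (add_le_add hSx hx) (abs_nonneg K)
    have hm := (norm_nonneg _).trans hx
    have := mul_nonneg (abs_nonneg K) hm
    exact max_le (by linarith) (by linarith)
  let Ψ := (eS.symm.trans eT).toLinearMap.mkContinuous _ hΨ
  obtain ⟨C, hC, hpre⟩ := Ψ.exists_preimage_norm_le (eS.symm.trans eT).surjective
  refine ⟨C, hC.le, fun x => ?_⟩
  obtain ⟨p, hp, hpC⟩ := hpre (eT x)
  obtain rfl : p = eS x := eS.symm_apply_eq.mp (eT.injective hp)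
  calc ‖S x‖ ≤ ‖eS x‖ := by rw [norm_eS]; exact le_max_right _ _
    _ ≤ C * ‖eT x‖ := hpC
    _ ≤ C * (‖T x‖ + ‖(x : E)‖) := by
      gcongr
      rw [norm_eT]
      exact max_le (by linarith [norm_nonneg (T x)]) (by linarith [norm_nonneg (x : E)])

end Banach

section Continuity

variable {𝕜 F M : Type*} [RCLike 𝕜] [NormedAddCommGroup F] [NormedSpace 𝕜 F]
  [AddCommGroup M] [Module 𝕜 M] {L B : M →ₗ[𝕜] F}

theorem LinearMap.surjective_add_smul_of_norm_le [CompleteSpace F] (hL : Bijective L) {K r : ℝ}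
    (hB : ∀ x, ‖B x‖ ≤ K * ‖L x‖) (hr : |r| * K < 1) : Surjective (L + (r : 𝕜) • B) :=
  LinearMap.surjective_add_of_norm_le hL hr fun x => by
    rw [LinearMap.smul_apply, norm_smul, RCLike.norm_ofReal, mul_assoc]
    exact mul_le_mul_of_nonneg_left (hB x) (abs_nonneg r)

theorem norm_le_two_mul_norm_add_smul {K t u : ℝ} (hK : 0 ≤ K)
    (hB : ∀ x, ‖B x‖ ≤ K * ‖(L + (t : 𝕜) • B) x‖) (hu : |u - t| * (2 * K) ≤ 1) (x : M) :
    ‖B x‖ ≤ 2 * K * ‖(L + (u : 𝕜) • B) x‖ := by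
  have hLt : (L + (t : 𝕜) • B) x = (L + (u : 𝕜) • B) x + ((t - u : ℝ) : 𝕜) • B x := by
    simp only [LinearMap.add_apply, LinearMap.smul_apply, RCLike.ofReal_sub]
    module
  have hLt' : ‖(L + (t : 𝕜) • B) x‖ ≤ ‖(L + (u : 𝕜) • B) x‖ + |u - t| * ‖B x‖ := by
    rw [hLt, abs_sub_comm]
    refine (norm_add_le _ _).trans_eq ?_
    rw [norm_smul, RCLike.norm_ofReal]
  have := mul_le_mul_of_nonneg_left hLt' hK
  have := mul_le_mul_of_nonneg_right hu (norm_nonneg (B x))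
  nlinarith [hB x]

theorem surjective_add_smul_of_isPreconnected [CompleteSpace F] {s : Set ℝ} (hs : IsPreconnected s)
    (hinj : ∀ t ∈ s, Injective (L + (t : 𝕜) • B))
    (hB : ∀ t ∈ s, ∃ K, ∀ x, ‖B x‖ ≤ K * ‖(L + (t : 𝕜) • B) x‖)
    {t₀ t₁ : ℝ} (ht₀ : t₀ ∈ s) (ht₁ : t₁ ∈ s) (h₀ : Surjective (L + (t₀ : 𝕜) • B)) :
    Surjective (L + (t₁ : 𝕜) • B) := by
  have shift (t u : ℝ) : L + (u : 𝕜) • B = (L + (t : 𝕜) • B) + ((u - t : ℝ) : 𝕜) • B := by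
    ext x
    simp only [LinearMap.add_apply, LinearMap.smul_apply, RCLike.ofReal_sub]
    module
  refine hs.induction₂' (fun t u => Surjective (L + (t : 𝕜) • B) → Surjective (L + (u : 𝕜) • B))
    (fun t ht => ?_) (fun _ _ _ _ _ _ h h' => h' ∘ h) ht₀ ht₁ h₀
  obtain ⟨K, hK⟩ := hB t ht
  obtain ⟨K, hK0, hK⟩ : ∃ K', 0 < K' ∧ ∀ x, ‖B x‖ ≤ K' * ‖(L + (t : 𝕜) • B) x‖ :=
    ⟨|K| + 1, by positivity, fun x => (hK x).trans (by gcongr; linarith [le_abs_self K])⟩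
  have hnear : ∀ᶠ u in 𝓝[s] t, u ∈ s ∧ |u - t| * (2 * K) < 1 := by
    refine eventually_mem_nhdsWithin.and (nhdsWithin_le_nhds ?_)
    refine Metric.eventually_nhds_iff.mpr ⟨1 / (2 * K), by positivity, fun u hu => ?_⟩
    rwa [Real.dist_eq, lt_div_iff₀ (by positivity)] at hu
  filter_upwards [hnear] with u ⟨hu, hut⟩
  constructor
  · intro ht_surj
    rw [shift t u]
    exact LinearMap.surjective_add_smul_of_norm_le ⟨hinj t ht, ht_surj⟩ hK (by nlinarith)
  · intro hu_surj
    rw [shift u t]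
    exact LinearMap.surjective_add_smul_of_norm_le ⟨hinj u hu, hu_surj⟩
      (norm_le_two_mul_norm_add_smul hK0.le hK hut.le) (by rwa [abs_sub_comm])

end Continuity

namespace LinearPMap.IsFormalAdjoint

variable {H : Type*} [NormedAddCommGroup H] [InnerProductSpace ℂ H] {f : H →ₗ.[ℂ] H} {σ : ℂ}

theorem norm_add_smul_sq (hf : f.IsFormalAdjoint f) (hσ : σ.re = 0) (x : f.domain) :
    ‖f x + σ • (x : H)‖ ^ 2 = ‖f x‖ ^ 2 + ‖σ‖ ^ 2 * ‖(x : H)‖ ^ 2 := by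
  have hreal : (⟪f x, (x : H)⟫_ℂ).im = 0 := by
    rw [← Complex.conj_eq_iff_im, inner_conj_symm]
    exact (hf x x).symm
  rw [@norm_add_sq ℂ, inner_smul_right, norm_smul, mul_pow]
  simp [hσ, hreal]

theorem norm_le_norm_add_smul (hf : f.IsFormalAdjoint f) (hσ : σ.re = 0) (hσ1 : ‖σ‖ = 1)
    (x : f.domain) : ‖(x : H)‖ ≤ ‖f x + σ • (x : H)‖ := by
  refine le_of_sq_le_sq ?_ (norm_nonneg _)
  rw [hf.norm_add_smul_sq hσ, hσ1]
  nlinarith [sq_nonneg ‖f x‖]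

theorem norm_apply_le_norm_add_smul (hf : f.IsFormalAdjoint f) (hσ : σ.re = 0)
    (hσ1 : ‖σ‖ = 1) (x : f.domain) : ‖f x‖ ≤ ‖f x + σ • (x : H)‖ := by
  refine le_of_sq_le_sq ?_ (norm_nonneg _)
  rw [hf.norm_add_smul_sq hσ, hσ1]
  nlinarith [sq_nonneg ‖(x : H)‖]

theorem injective_add_smul (hf : f.IsFormalAdjoint f) (hσ : σ.re = 0) (hσ1 : ‖σ‖ = 1) :
    Injective (f.toFun + σ • f.domain.subtype) := by
  refine (injective_iff_map_eq_zero _).mpr fun x hx => ?_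
  have := hf.norm_le_norm_add_smul hσ hσ1 x
  simp_all

theorem isClosed_range_add_smul [CompleteSpace H] (hf : f.IsFormalAdjoint f) (hfc : f.IsClosed)
    (hσ : σ.re = 0) (hσ1 : ‖σ‖ = 1) :
    _root_.IsClosed (Set.range (f.toFun + σ • f.domain.subtype)) := by
  have := hfc.completeSpace_coe
  let g : f.graph →L[ℂ] H :=
    (ContinuousLinearMap.snd ℂ H H + σ • ContinuousLinearMap.fst ℂ H H) ∘L f.graph.subtypeL
  have graph_point (p : f.graph) : ∃ x : f.domain, p = ⟨((x : H), f x), f.mem_graph x⟩ := by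
    obtain ⟨x, h⟩ := f.mem_graph_iff'.mp p.2
    exact ⟨x, Subtype.ext h.symm⟩
  have hg : Set.range g = Set.range (f.toFun + σ • f.domain.subtype) := by
    ext y
    constructor
    · rintro ⟨p, rfl⟩
      obtain ⟨x, rfl⟩ := graph_point p
      exact ⟨x, rfl⟩
    · rintro ⟨x, rfl⟩
      exact ⟨⟨_, f.mem_graph x⟩, rfl⟩
  have hanti : AntilipschitzWith 1 g := g.antilipschitz_of_bound fun p => by
    obtain ⟨x, rfl⟩ := graph_point p
    rw [NNReal.coe_one, one_mul]
    exact max_le (hf.norm_le_norm_add_smul hσ hσ1 x) (hf.norm_apply_le_norm_add_smul hσ hσ1 x)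
  rw [← hg]
  exact hanti.isClosed_range g.uniformContinuous

end LinearPMap.IsFormalAdjoint

theorem exists_norm_le_mul_norm_add_smul {H : Type*} [NormedAddCommGroup H]
    [InnerProductSpace ℂ H] [CompleteSpace H] {D : Submodule ℂ H} {S B : D →ₗ[ℂ] H}
    {t a b : ℝ} {σ : ℂ} (ha : 0 ≤ a) (hb : 0 ≤ b)
    (hB : ∀ x, ‖B x‖ ≤ a * ‖S x‖ + b * ‖(x : H)‖) (hS : (LinearPMap.mk D S).IsClosed)
    (hSB : (LinearPMap.mk D (S + (t : ℂ) • B)).IsClosed)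
    (hsym : (LinearPMap.mk D (S + (t : ℂ) • B)).IsFormalAdjoint (.mk D (S + (t : ℂ) • B)))
    (hσ : σ.re = 0) (hσ1 : ‖σ‖ = 1) :
    ∃ K, ∀ x, ‖B x‖ ≤ K * ‖(S + (t : ℂ) • B) x + σ • (x : H)‖ := by
  have hSB_le (x : D) : ‖(S + (t : ℂ) • B) x‖ ≤ (1 + |t| * (a + b)) * (‖S x‖ + ‖(x : H)‖) :=
    calc ‖(S + (t : ℂ) • B) x‖ ≤ ‖S x‖ + |t| * ‖B x‖ := by
          rw [LinearMap.add_apply, LinearMap.smul_apply]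
          refine (norm_add_le _ _).trans_eq ?_
          rw [norm_smul, Complex.norm_real, Real.norm_eq_abs]
      _ ≤ ‖S x‖ + |t| * (a * ‖S x‖ + b * ‖(x : H)‖) := by gcongr; exact hB x
      _ ≤ (1 + |t| * (a + b)) * (‖S x‖ + ‖(x : H)‖) := by
          nlinarith [mul_nonneg (mul_nonneg (abs_nonneg t) ha) (norm_nonneg (x : H)),
            mul_nonneg (mul_nonneg (abs_nonneg t) hb) (norm_nonneg (S x)), norm_nonneg (x : H)]
  obtain ⟨C, hC0, hC⟩ := exists_norm_le_of_isClosed_graph hS hSB hSB_le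
  refine ⟨2 * a * C + b, fun x => ?_⟩
  have h1 := hsym.norm_le_norm_add_smul hσ hσ1 x
  have h2 := hsym.norm_apply_le_norm_add_smul hσ hσ1 x
  rw [LinearPMap.mk_apply] at h1 h2
  set N := ‖(S + (t : ℂ) • B) x + σ • (x : H)‖
  calc ‖B x‖ ≤ a * ‖S x‖ + b * ‖(x : H)‖ := hB x
    _ ≤ a * (C * (‖(S + (t : ℂ) • B) x‖ + ‖(x : H)‖)) + b * ‖(x : H)‖ := by gcongr; exact hC x
    _ ≤ a * (C * (N + N)) + b * N := by gcongr
    _ = (2 * a * C + b) * N := by ring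

namespace IsSelfAdjointPMap

variable {H : Type*} [NormedAddCommGroup H] [InnerProductSpace ℂ H] {f : H →ₗ.[ℂ] H}

theorem isFormalAdjoint (hf : IsSelfAdjointPMap f) : f.IsFormalAdjoint f := fun x y =>
  ((hf.2 x (f x)).mp (f.mem_graph x) y y.2).symm

theorem isClosed (hf : IsSelfAdjointPMap f) : f.IsClosed := by
  have hgraph : (f.graph : Set (H × H)) =
      ⋂ x : f.domain, {p | ⟪p.1, f x⟫_ℂ = ⟪p.2, (x : H)⟫_ℂ} := by
    ext ⟨ψ, χ⟩
    simp only [SetLike.mem_coe, hf.2 ψ χ, Set.mem_iInter, Set.mem_ofPred_eq, Subtype.forall]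
  rw [LinearPMap.IsClosed, hgraph]
  exact isClosed_iInter fun x => isClosed_eq (by fun_prop) (by fun_prop)

theorem surjective_add_smul [CompleteSpace H] (hf : IsSelfAdjointPMap f) {σ : ℂ}
    (hσ : σ.re = 0) (hσ1 : ‖σ‖ = 1) : Surjective (f.toFun + σ • f.domain.subtype) := by
  have : CompleteSpace (LinearMap.range (f.toFun + σ • f.domain.subtype)) :=
    (hf.isFormalAdjoint.isClosed_range_add_smul hf.isClosed hσ hσ1).completeSpace_coe
  rw [← LinearMap.range_eq_top, ← Submodule.orthogonal_eq_bot_iff, Submodule.eq_bot_iff]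
  intro ψ hψ
  -- `ψ ⊥ range (f + σ)` makes `ψ` an eigenvector of `f` for `σ`, but `f - σ` is injective.
  have hgraph : (ψ, σ • ψ) ∈ f.graph := (hf.2 _ _).mpr fun x hx => by
    have hx := Submodule.inner_left_of_mem_orthogonal (LinearMap.mem_range_self _ ⟨x, hx⟩) hψ
    have hconj : conj σ = -σ := Complex.ext (by simp [hσ]) (by simp)
    rw [LinearMap.add_apply, inner_add_right, LinearMap.smul_apply, inner_smul_right,
      Submodule.subtype_apply, LinearPMap.toFun_eq_coe] at hx
    rw [inner_smul_left, hconj]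
    linear_combination hx
  obtain ⟨y, hy, hfy⟩ := f.mem_graph_iff.mp hgraph
  have := hf.isFormalAdjoint.norm_le_norm_add_smul (σ := -σ) (by simp [hσ]) (by simp [hσ1]) y
  simp_all

end IsSelfAdjointPMap

theorem isSelfAdjointPMap_of_surjective {H : Type*} [NormedAddCommGroup H]
    [InnerProductSpace ℂ H] {f : H →ₗ.[ℂ] H} (hdense : Dense (f.domain : Set H))
    (hsym : f.IsFormalAdjoint f) (hI : Surjective (f.toFun + Complex.I • f.domain.subtype))
    (hI' : Surjective (f.toFun + (-Complex.I) • f.domain.subtype)) : IsSelfAdjointPMap f := by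
  refine ⟨hdense, fun ψ χ => ⟨fun h x hx => ?_, fun h => ?_⟩⟩
  · obtain ⟨y, rfl, rfl⟩ := f.mem_graph_iff.mp h
    exact (hsym y ⟨x, hx⟩).symm
  obtain ⟨u, hu⟩ := hI' (χ - Complex.I • ψ)
  have hu' : χ = f u - Complex.I • (u : H) + Complex.I • ψ := by
    rw [← sub_eq_iff_eq_add, ← hu]
    simp [sub_eq_add_neg]
  have horth (x : f.domain) : ⟪ψ - u, f x + Complex.I • (x : H)⟫_ℂ = 0 := by
    have hψ := h x x.2
    rw [hu'] at hψ
    simp only [inner_sub_left, inner_add_left, inner_add_right, inner_smul_left,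
      inner_smul_right, Complex.conj_I, hsym u x] at hψ ⊢
    linear_combination hψ
  obtain rfl : ψ = u := by
    obtain ⟨x, hx⟩ := hI (ψ - u)
    have hx' : f x + Complex.I • (x : H) = ψ - u := hx
    have := horth x
    rwa [hx', inner_self_eq_zero, sub_eq_zero] at this
  rw [hu']
  simp [f.mem_graph u]

theorem LinearPMap.isFormalAdjoint_mk_add_smul {H : Type*} [NormedAddCommGroup H]
    [InnerProductSpace ℂ H] {D : Submodule ℂ H} {S B : D →ₗ[ℂ] H}
    (hS : (LinearPMap.mk D S).IsFormalAdjoint (.mk D S))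
    (hB : (LinearPMap.mk D B).IsFormalAdjoint (.mk D B)) (t : ℝ) :
    (LinearPMap.mk D (S + (t : ℂ) • B)).IsFormalAdjoint (.mk D (S + (t : ℂ) • B)) :=
  fun x y => by
    simp only [LinearPMap.mk_apply, LinearMap.add_apply, LinearMap.smul_apply, inner_add_left,
      inner_add_right, inner_smul_left, inner_smul_right, Complex.conj_ofReal]
    exact congrArg₂ (· + ·) (hS x y) (congrArg (_ * ·) (hB x y))

theorem IsSelfAdjointPMap.surjective_add_smul_add_smul {H : Type*} [NormedAddCommGroup H]
    [InnerProductSpace ℂ H] [CompleteSpace H] {A : H →ₗ.[ℂ] H} (hA : IsSelfAdjointPMap A)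
    {B : A.domain →ₗ[ℂ] H} (hBsym : (LinearPMap.mk A.domain B).IsFormalAdjoint (.mk A.domain B))
    {a b : ℝ} (ha : 0 ≤ a) (hb : 0 ≤ b) (hB : ∀ x, ‖B x‖ ≤ a * ‖A x‖ + b * ‖(x : H)‖)
    (hclosed : ∀ t ∈ Set.Icc (0 : ℝ) 1, (LinearPMap.mk A.domain (A.toFun + (t : ℂ) • B)).IsClosed)
    {σ : ℂ} (hσ : σ.re = 0) (hσ1 : ‖σ‖ = 1) {t : ℝ} (ht : t ∈ Set.Icc (0 : ℝ) 1) :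
    Surjective (A.toFun + (t : ℂ) • B + σ • A.domain.subtype) := by
  have hsym := LinearPMap.isFormalAdjoint_mk_add_smul hA.isFormalAdjoint hBsym
  -- `surjective_add_smul_of_isPreconnected` casts `t` by `RCLike.ofReal`, which is
  -- `Complex.ofReal` only up to unfolding.
  have hshift (t : ℝ) : A.toFun + σ • A.domain.subtype + (RCLike.ofReal t : ℂ) • B =
      A.toFun + (t : ℂ) • B + σ • A.domain.subtype := add_right_comm _ _ _
  rw [← hshift]
  refine surjective_add_smul_of_isPreconnected isPreconnected_Icc (fun t _ => ?_) (fun t ht => ?_)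
    (Set.left_mem_Icc.2 zero_le_one) ht ?_
  · rw [hshift]
    exact (hsym t).injective_add_smul hσ hσ1
  · rw [hshift]
    exact exists_norm_le_mul_norm_add_smul ha hb hB hA.isClosed (hclosed t ht) (hsym t) hσ hσ1
  · rw [hshift]
    simpa using hA.surjective_add_smul hσ hσ1

/-- Wüst-type perturbation theorem: if `A` is self-adjoint, `B` is
symmetric and `A`-bounded, and `A + tB` (on `dom A`) is closed for all `t ∈ [0,1]`,
then `A + B` is self-adjoint on `dom A`. -/
theorem wuest_perturbation_theorem
    {H : Type*} [NormedAddCommGroup H] [InnerProductSpace ℂ H] [CompleteSpace H]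
    (A B : H →ₗ.[ℂ] H)
    (hA : IsSelfAdjointPMap A)
    (hdom : A.domain ≤ B.domain)
    (hBsym : ∀ x y : B.domain,
      (inner ℂ (B x) (y : H) : ℂ) = (inner ℂ (x : H) (B y) : ℂ))
    (a b : ℝ) (ha : 0 ≤ a) (hb : 0 ≤ b)
    (hbound : ∀ x : A.domain,
      ‖B ⟨(x : H), hdom x.2⟩‖ ≤ a * ‖A x‖ + b * ‖(x : H)‖)
    (hclosed : ∀ t ∈ Set.Icc (0 : ℝ) 1, IsClosed {p : H × H |
      ∃ hp : p.1 ∈ A.domain, p.2 = A ⟨p.1, hp⟩ + (t : ℂ) • B ⟨p.1, hdom hp⟩}) :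
    ∀ C : H →ₗ.[ℂ] H,
      (C.graph : Set (H × H)) = {p : H × H |
        ∃ hp : p.1 ∈ A.domain, p.2 = A ⟨p.1, hp⟩ + B ⟨p.1, hdom hp⟩} →
      IsSelfAdjointPMap C := by
  intro C hC
  let B' : A.domain →ₗ[ℂ] H := B.toFun ∘ₗ Submodule.inclusion hdom
  have hB'sym : (LinearPMap.mk A.domain B').IsFormalAdjoint (.mk A.domain B') := fun x y =>
    hBsym (Submodule.inclusion hdom x) (Submodule.inclusion hdom y)
  have hclosed' (t : ℝ) (ht : t ∈ Set.Icc 0 1) :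
      (LinearPMap.mk A.domain (A.toFun + (t : ℂ) • B')).IsClosed := by
    rw [LinearPMap.IsClosed, LinearPMap.coe_graph_mk]
    exact hclosed t ht
  have hsurj (σ : ℂ) (hσ : σ.re = 0) (hσ1 : ‖σ‖ = 1) :=
    hA.surjective_add_smul_add_smul hB'sym ha hb hbound hclosed' hσ hσ1
      (Set.right_mem_Icc.2 zero_le_one)
  obtain rfl : C = LinearPMap.mk A.domain (A.toFun + ((1 : ℝ) : ℂ) • B') :=
    LinearPMap.eq_of_eq_graph <| SetLike.coe_injective <| by
      rw [hC, LinearPMap.coe_graph_mk, Complex.ofReal_one, one_smul]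
      rfl
  exact isSelfAdjointPMap_of_surjective hA.1
    (LinearPMap.isFormalAdjoint_mk_add_smul hA.isFormalAdjoint hB'sym 1)
    (hsurj _ (by simp) (by simp)) (hsurj _ (by simp) (by simp))

end
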